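/- arXiv:1504.01755 — 3 statements merged into one kernel-verified Lean document; each statement's English description precedes it below -/
import Mathlib

section
/- Let a, b ∈ ℚ with a, b ≠ 0, c ∈ ℚ, f_1(x) = a^6b^6 + a^3b^3cx + (3a^2 - b^6 - b^3c)x^2, f_2(x) = 3a^4 - a^3c + cx, F(x,y) = y^3 + f_2(x)y^2 + f_1(x)y + x^4. Then the point Q = (-a^2b^3, -a^2b^6) satisfies F(Q) = 0, and substituting the tangent line y = b^3x into F, x = -a^2b^3 is a root of multiplicity exactly 3 of F(x, b^3x). -/
open Polynomial

noncomputable def quarticTangentSub (a b c : ℚ) : ℚ[X] :=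
  (C (b ^ 3) * X) ^ 3 + (C (3 * a ^ 4 - a ^ 3 * c) + C c * X) * (C (b ^ 3) * X) ^ 2 +
    (C (a ^ 6 * b ^ 6) + C (a ^ 3 * b ^ 3 * c) * X + C (3 * a ^ 2 - b ^ 6 - b ^ 3 * c) * X ^ 2) *
      (C (b ^ 3) * X) + X ^ 4

lemma quarticTangentSub_eq (a b c : ℚ) :
    quarticTangentSub a b c = X * (X - C (-(a ^ 2 * b ^ 3))) ^ 3 := by
  unfold quarticTangentSub
  simp only [map_mul, map_pow, map_sub, map_add, map_neg, map_ofNat]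
  ring

/-- The point `Q = (-a²b³, -a²b⁶)` lies on the quartic `F = 0`, and
substituting the tangent line `y = b³x` into `F` yields a polynomial in `x` which is
divisible by `(x + a²b³)³`, with `x = -a²b³` a root of multiplicity exactly 3. -/
theorem stmt_10 (a b c : ℚ) (ha : a ≠ 0) (hb : b ≠ 0) :
    ((-(a ^ 2 * b ^ 6)) ^ 3 +
        (3 * a ^ 4 - a ^ 3 * c + c * (-(a ^ 2 * b ^ 3))) * (-(a ^ 2 * b ^ 6)) ^ 2 +
        (a ^ 6 * b ^ 6 + a ^ 3 * b ^ 3 * c * (-(a ^ 2 * b ^ 3)) +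
          (3 * a ^ 2 - b ^ 6 - b ^ 3 * c) * (-(a ^ 2 * b ^ 3)) ^ 2) * (-(a ^ 2 * b ^ 6)) +
        (-(a ^ 2 * b ^ 3)) ^ 4 = 0) ∧
    (X + C (a ^ 2 * b ^ 3)) ^ 3 ∣ quarticTangentSub a b c ∧
    Polynomial.rootMultiplicity (-(a ^ 2 * b ^ 3)) (quarticTangentSub a b c) = 3 := by
  have hne : -(a ^ 2 * b ^ 3) ≠ 0 := by
    simp [pow_eq_zero_iff, ha, hb]
  refine ⟨by ring, ⟨X, ?_⟩, ?_⟩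
  · rw [quarticTangentSub_eq]; simp only [map_neg]; ring
  · rw [quarticTangentSub_eq, rootMultiplicity_mul, rootMultiplicity_X_sub_C_pow,
      rootMultiplicity_eq_zero, zero_add]
    · simpa [IsRoot] using hne
    · exact mul_ne_zero X_ne_zero (pow_ne_zero _ (X_sub_C_ne_zero _))
end

section
/- Let d_1, d_2, d_3, d_4 ∈ ℚ and let F(x,y) = ((y + d_1x + d_2)^2 + d_3x + d_4x^2)·y + x^4 and D(x,y) = (y + d_1x + d_2)^2 + d_3x + d_4x^2. Then the point R = (0, -d_2) lies on both curves F = 0 and D = 0, and the intersection multiplicity of the curves F = 0 and D = 0 at R equals 8, provided d_2 ≠ 0 and d_3 ≠ 0. -/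
/-!
Write `u = y + d₁x + d₂`, so that `D = u² + d₃x + d₄x²` and `F ≡ x⁴` modulo `D`. In the ring
`Q = ℚ[x,y]_R ⧸ (F, D)` the relations `x⁴ = 0` and `u² = -x(d₃ + d₄x)` give `u⁸ = 0`, and since `d₃`
is a unit, `x` is a function of `u`: `x = ξ(u)` with `ξ(t) = -(t²/d₃ + d₄t⁴/d₃³ + 2d₄²t⁶/d₃⁵)`, the
truncated branch of `D = 0` through `R` (smooth and tangent to `x = 0` because `d₃ ≠ 0`). So `t ↦ u`
maps `ℚ[t]/(t⁸)` onto `Q`. Conversely `(x, y) = (ξ(t), t - d₁ξ(t) - d₂)` parametrizes `D = 0`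
modulo `t⁸`, kills `F`, and sends every polynomial not vanishing at `R` to a unit, so it factors
through `Q` and inverts the first map. Hence `Q ≅ ℚ[t]/(t⁸)` has dimension 8.
-/

open MvPolynomial

/-- The conic `D(x,y) = (y + d₁x + d₂)² + d₃x + d₄x²` as a polynomial in `ℚ[x,y]`,
with `x = X 0`, `y = X 1`. -/
noncomputable def conicD (d₁ d₂ d₃ d₄ : ℚ) : MvPolynomial (Fin 2) ℚ :=
  (X 1 + C d₁ * X 0 + C d₂) ^ 2 + C d₃ * X 0 + C d₄ * (X 0) ^ 2

/-- The quartic `F(x,y) = D(x,y)·y + x⁴` as a polynomial in `ℚ[x,y]`. -/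
noncomputable def quarticF (d₁ d₂ d₃ d₄ : ℚ) : MvPolynomial (Fin 2) ℚ :=
  conicD d₁ d₂ d₃ d₄ * X 1 + (X 0) ^ 4

/-- The maximal ideal of `ℚ[x,y]` corresponding to the point `R = (0, -d₂)`. -/
noncomputable def maxIdealR (d₂ : ℚ) : Ideal (MvPolynomial (Fin 2) ℚ) :=
  Ideal.span {X 0, X 1 + C d₂}

theorem sub_C_eval_mem_maxIdealR (d₂ : ℚ) (p : MvPolynomial (Fin 2) ℚ) :
    p - C (eval (fun i => if i = 0 then 0 else -d₂) p) ∈ maxIdealR d₂ := by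
  induction p using MvPolynomial.induction_on with
  | C a => simp
  | add p q hp hq => simpa [add_sub_add_comm] using add_mem hp hq
  | mul_X p i hp =>
    have hX : X i - C (if i = 0 then 0 else -d₂) ∈ maxIdealR d₂ := by
      fin_cases i
      · exact Ideal.subset_span (by simp)
      · exact Ideal.subset_span (by simp [sub_eq_add_neg])
    have key : p * X i - C (eval (fun i => if i = 0 then 0 else -d₂) (p * X i)) =
        (p - C (eval (fun i => if i = 0 then 0 else -d₂) p)) * X i +
          C (eval (fun i => if i = 0 then 0 else -d₂) p) *
            (X i - C (if i = 0 then 0 else -d₂)) := by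
      simp only [eval_X, map_mul]; ring
    rw [key]
    exact add_mem (Ideal.mul_mem_right _ _ hp) (Ideal.mul_mem_left _ _ hX)

theorem maxIdealR_eq_ker_eval (d₂ : ℚ) :
    maxIdealR d₂ = RingHom.ker (eval (fun i => if i = 0 then 0 else -d₂)) := by
  refine le_antisymm (Ideal.span_le.2 ?_) fun p hp => ?_
  · rintro p (rfl | rfl) <;> simp
  · simpa [(RingHom.mem_ker).1 hp] using sub_C_eval_mem_maxIdealR d₂ p

instance isMaximal_maxIdealR (d₂ : ℚ) : (maxIdealR d₂).IsMaximal := by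
  rw [maxIdealR_eq_ker_eval]
  exact RingHom.ker_isMaximal_of_surjective _ fun q => ⟨C q, eval_C q⟩

theorem isUnit_of_le_comap_nilradical {A B : Type*} [CommRing A] [CommRing B] {m : Ideal A}
    (hm : m.IsMaximal) (f : A →+* B) (hf : m ≤ (nilradical B).comap f) {s : A} (hs : s ∉ m) :
    IsUnit (f s) := by
  obtain ⟨t, r, hr, hts⟩ := hm.exists_inv hs
  have hunit : IsUnit (f t * f s) := by
    rw [← map_mul, eq_sub_of_add_eq hts, map_sub, map_one]
    exact IsNilpotent.isUnit_one_sub (mem_nilradical.1 (hf hr))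
  exact isUnit_of_mul_isUnit_right hunit

noncomputable def branchPoly (d₃ d₄ : ℚ) : Polynomial ℚ :=
  -(Polynomial.C d₃⁻¹ * Polynomial.X ^ 2 + Polynomial.C (d₃⁻¹ ^ 3 * d₄) * Polynomial.X ^ 4 +
    Polynomial.C (2 * d₃⁻¹ ^ 5 * d₄ ^ 2) * Polynomial.X ^ 6)

section Branch

variable {S : Type*} [CommRing S] [Algebra ℚ S] {d₃ d₄ : ℚ}

theorem aeval_branchPoly (u : S) :
    Polynomial.aeval u (branchPoly d₃ d₄) =
      -(algebraMap ℚ S d₃⁻¹ * u ^ 2 + algebraMap ℚ S d₃⁻¹ ^ 3 * algebraMap ℚ S d₄ * u ^ 4 +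
        2 * algebraMap ℚ S d₃⁻¹ ^ 5 * algebraMap ℚ S d₄ ^ 2 * u ^ 6) := by
  simp only [branchPoly, map_neg, map_add, map_mul, map_pow, map_ofNat, Polynomial.aeval_C,
    Polynomial.aeval_X]

theorem aeval_branchPoly_pow_four {u : S} (hu : u ^ 8 = 0) :
    Polynomial.aeval u (branchPoly d₃ d₄) ^ 4 = 0 := by
  rw [aeval_branchPoly]
  linear_combination (algebraMap ℚ S d₃⁻¹ + algebraMap ℚ S d₃⁻¹ ^ 3 * algebraMap ℚ S d₄ * u ^ 2 +
    2 * algebraMap ℚ S d₃⁻¹ ^ 5 * algebraMap ℚ S d₄ ^ 2 * u ^ 4) ^ 4 * hu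

theorem conic_aeval_branchPoly (h3 : d₃ ≠ 0) {u : S} (hu : u ^ 8 = 0) :
    u ^ 2 + algebraMap ℚ S d₃ * Polynomial.aeval u (branchPoly d₃ d₄) +
      algebraMap ℚ S d₄ * Polynomial.aeval u (branchPoly d₃ d₄) ^ 2 = 0 := by
  have hc : algebraMap ℚ S d₃ * algebraMap ℚ S d₃⁻¹ = 1 := by
    rw [← map_mul, mul_inv_cancel₀ h3, map_one]
  rw [aeval_branchPoly]
  set a := algebraMap ℚ S d₃
  set b := algebraMap ℚ S d₄
  set c := algebraMap ℚ S d₃⁻¹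
  linear_combination (-(u ^ 2 + c ^ 2 * b * u ^ 4 + 2 * c ^ 4 * b ^ 2 * u ^ 6)) * hc +
    b * (5 * c ^ 6 * b ^ 2 + 4 * c ^ 8 * b ^ 3 * u ^ 2 + 4 * c ^ 10 * b ^ 4 * u ^ 4) * hu

theorem pow_eight_eq_zero_of_conic {x u : S} (hx : x ^ 4 = 0)
    (hD : u ^ 2 + algebraMap ℚ S d₃ * x + algebraMap ℚ S d₄ * x ^ 2 = 0) : u ^ 8 = 0 := by
  linear_combination (u ^ 6 - u ^ 4 * (algebraMap ℚ S d₃ * x + algebraMap ℚ S d₄ * x ^ 2) +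
    u ^ 2 * (algebraMap ℚ S d₃ * x + algebraMap ℚ S d₄ * x ^ 2) ^ 2 -
    (algebraMap ℚ S d₃ * x + algebraMap ℚ S d₄ * x ^ 2) ^ 3) * hD +
    (algebraMap ℚ S d₃ + algebraMap ℚ S d₄ * x) ^ 4 * hx

theorem eq_aeval_branchPoly (h3 : d₃ ≠ 0) {x u : S} (hx : x ^ 4 = 0)
    (hD : u ^ 2 + algebraMap ℚ S d₃ * x + algebraMap ℚ S d₄ * x ^ 2 = 0) :
    x = Polynomial.aeval u (branchPoly d₃ d₄) := by
  set ξ := Polynomial.aeval u (branchPoly d₃ d₄)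
  have hu := pow_eight_eq_zero_of_conic hx hD
  have hξ := conic_aeval_branchPoly (d₄ := d₄) h3 hu
  have hunit : IsUnit (algebraMap ℚ S d₃ + algebraMap ℚ S d₄ * (x + ξ)) := by
    refine IsNilpotent.isUnit_add_left_of_commute ?_ ((Ne.isUnit h3).map _) (Commute.all _ _)
    exact (Commute.all _ _).isNilpotent_mul_left
      ((Commute.all _ _).isNilpotent_add ⟨4, hx⟩ ⟨4, aeval_branchPoly_pow_four hu⟩)
  have hmul : (x - ξ) * (algebraMap ℚ S d₃ + algebraMap ℚ S d₄ * (x + ξ)) = 0 := by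
    linear_combination hD - hξ
  exact sub_eq_zero.1 (hunit.mul_left_eq_zero.1 hmul)

end Branch

abbrev TruncatedPolyRing := AdjoinRoot (Polynomial.X ^ 8 : Polynomial ℚ)

theorem finrank_truncatedPolyRing : Module.finrank ℚ TruncatedPolyRing = 8 := by
  rw [(AdjoinRoot.powerBasis (pow_ne_zero 8 Polynomial.X_ne_zero)).finrank]
  simp [AdjoinRoot.powerBasis]

theorem root_pow_eight : AdjoinRoot.root (Polynomial.X ^ 8 : Polynomial ℚ) ^ 8 = 0 := by
  rw [← AdjoinRoot.mk_X, ← map_pow, AdjoinRoot.mk_self]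

section Curves

variable (d₁ d₂ d₃ d₄ : ℚ)

noncomputable def coordU : MvPolynomial (Fin 2) ℚ := X 1 + C d₁ * X 0 + C d₂

noncomputable def intersectionIdeal : Ideal (Localization.AtPrime (maxIdealR d₂)) :=
  Ideal.span {algebraMap (MvPolynomial (Fin 2) ℚ) (Localization.AtPrime (maxIdealR d₂))
      (quarticF d₁ d₂ d₃ d₄),
    algebraMap (MvPolynomial (Fin 2) ℚ) (Localization.AtPrime (maxIdealR d₂)) (conicD d₁ d₂ d₃ d₄)}

-- A `def` with its own instances: through an `abbrev`, unifying with the generic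
-- `[CommRing S] [Algebra ℚ S]` lemmas unfolds the quotient of the localization and times out.
def IntersectionRing : Type := Localization.AtPrime (maxIdealR d₂) ⧸ intersectionIdeal d₁ d₂ d₃ d₄

noncomputable instance : CommRing (IntersectionRing d₁ d₂ d₃ d₄) := Ideal.Quotient.commRing _

noncomputable instance : Algebra ℚ (IntersectionRing d₁ d₂ d₃ d₄) := Ideal.Quotient.algebra ℚ

section Relations

variable {S : Type*} [CommRing S] [Algebra ℚ S] (f : MvPolynomial (Fin 2) ℚ →ₐ[ℚ] S)

theorem map_conicD : f (conicD d₁ d₂ d₃ d₄) =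
    f (coordU d₁ d₂) ^ 2 + algebraMap ℚ S d₃ * f (X 0) + algebraMap ℚ S d₄ * f (X 0) ^ 2 := by
  simp only [conicD, coordU, map_add, map_mul, map_pow, algHom_C]

theorem map_X_zero_pow_four (hF : f (quarticF d₁ d₂ d₃ d₄) = 0)
    (hD : f (conicD d₁ d₂ d₃ d₄) = 0) : f (X 0) ^ 4 = 0 := by
  simpa [quarticF, hD] using hF

end Relations

noncomputable def branchParam : MvPolynomial (Fin 2) ℚ →ₐ[ℚ] TruncatedPolyRing :=
  aeval ![Polynomial.aeval (AdjoinRoot.root _) (branchPoly d₃ d₄),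
    AdjoinRoot.root _ -
      algebraMap ℚ _ d₁ * Polynomial.aeval (AdjoinRoot.root _) (branchPoly d₃ d₄) -
      algebraMap ℚ _ d₂]

theorem branchParam_X_zero :
    branchParam d₁ d₂ d₃ d₄ (X 0) = Polynomial.aeval (AdjoinRoot.root _) (branchPoly d₃ d₄) := by
  simp [branchParam]

theorem branchParam_coordU : branchParam d₁ d₂ d₃ d₄ (coordU d₁ d₂) = AdjoinRoot.root _ := by
  simp only [branchParam, coordU, map_add, map_mul, aeval_X, algHom_C, Matrix.cons_val_zero,
    Matrix.cons_val_one]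
  ring

theorem branchParam_conicD (h3 : d₃ ≠ 0) : branchParam d₁ d₂ d₃ d₄ (conicD d₁ d₂ d₃ d₄) = 0 := by
  rw [map_conicD, branchParam_coordU, branchParam_X_zero]
  exact conic_aeval_branchPoly h3 root_pow_eight

theorem branchParam_quarticF (h3 : d₃ ≠ 0) :
    branchParam d₁ d₂ d₃ d₄ (quarticF d₁ d₂ d₃ d₄) = 0 := by
  rw [quarticF, map_add, map_mul, branchParam_conicD _ _ _ _ h3, map_pow, branchParam_X_zero,
    aeval_branchPoly_pow_four root_pow_eight, zero_mul, add_zero]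

theorem maxIdealR_le_comap_branchParam :
    maxIdealR d₂ ≤ (nilradical TruncatedPolyRing).comap (branchParam d₁ d₂ d₃ d₄) := by
  have hx : IsNilpotent (branchParam d₁ d₂ d₃ d₄ (X 0)) :=
    ⟨4, by rw [branchParam_X_zero, aeval_branchPoly_pow_four root_pow_eight]⟩
  have hu : IsNilpotent (branchParam d₁ d₂ d₃ d₄ (coordU d₁ d₂)) :=
    ⟨8, by rw [branchParam_coordU, root_pow_eight]⟩
  refine Ideal.span_le.2 ?_
  rintro p (rfl | rfl)
  · exact hx
  · have hy : X 1 + C d₂ = coordU d₁ d₂ - C d₁ * X 0 := by rw [coordU]; ring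
    rw [SetLike.mem_coe, Ideal.mem_comap, mem_nilradical, hy, map_sub, map_mul]
    exact (Commute.all _ _).isNilpotent_sub hu ((Commute.all _ _).isNilpotent_mul_left hx)

noncomputable def toIntersectionRing :
    MvPolynomial (Fin 2) ℚ →ₐ[ℚ] IntersectionRing d₁ d₂ d₃ d₄ :=
  (Ideal.Quotient.mkₐ ℚ _).comp (IsScalarTower.toAlgHom ℚ _ (Localization.AtPrime (maxIdealR d₂)))

theorem toIntersectionRing_quarticF : toIntersectionRing d₁ d₂ d₃ d₄ (quarticF d₁ d₂ d₃ d₄) = 0 :=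
  Ideal.Quotient.eq_zero_iff_mem.2 (Ideal.subset_span (Set.mem_insert _ _))

theorem toIntersectionRing_conicD : toIntersectionRing d₁ d₂ d₃ d₄ (conicD d₁ d₂ d₃ d₄) = 0 :=
  Ideal.Quotient.eq_zero_iff_mem.2 (Ideal.subset_span (Set.mem_insert_of_mem _ rfl))

theorem toIntersectionRing_X_zero_pow_four : toIntersectionRing d₁ d₂ d₃ d₄ (X 0) ^ 4 = 0 :=
  map_X_zero_pow_four d₁ d₂ d₃ d₄ (toIntersectionRing d₁ d₂ d₃ d₄)
    (toIntersectionRing_quarticF d₁ d₂ d₃ d₄) (toIntersectionRing_conicD d₁ d₂ d₃ d₄)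

theorem toIntersectionRing_conic :
    toIntersectionRing d₁ d₂ d₃ d₄ (coordU d₁ d₂) ^ 2 +
      algebraMap ℚ (IntersectionRing d₁ d₂ d₃ d₄) d₃ * toIntersectionRing d₁ d₂ d₃ d₄ (X 0) +
      algebraMap ℚ (IntersectionRing d₁ d₂ d₃ d₄) d₄ * toIntersectionRing d₁ d₂ d₃ d₄ (X 0) ^ 2
      = 0 := by
  rw [← map_conicD, toIntersectionRing_conicD]

theorem toIntersectionRing_coordU_pow_eight :
    toIntersectionRing d₁ d₂ d₃ d₄ (coordU d₁ d₂) ^ 8 = 0 :=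
  pow_eight_eq_zero_of_conic (toIntersectionRing_X_zero_pow_four d₁ d₂ d₃ d₄)
    (toIntersectionRing_conic d₁ d₂ d₃ d₄)

noncomputable def truncatedLift : TruncatedPolyRing →ₐ[ℚ] IntersectionRing d₁ d₂ d₃ d₄ :=
  AdjoinRoot.liftAlgHom _ (Algebra.ofId ℚ _) (toIntersectionRing d₁ d₂ d₃ d₄ (coordU d₁ d₂)) (by
    rw [Polynomial.eval₂_X_pow, toIntersectionRing_coordU_pow_eight])

theorem truncatedLift_root :
    truncatedLift d₁ d₂ d₃ d₄ (AdjoinRoot.root _) = toIntersectionRing d₁ d₂ d₃ d₄ (coordU d₁ d₂) :=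
  AdjoinRoot.liftAlgHom_root ..

theorem truncatedLift_comp_branchParam (h3 : d₃ ≠ 0) :
    (truncatedLift d₁ d₂ d₃ d₄).comp (branchParam d₁ d₂ d₃ d₄) =
      toIntersectionRing d₁ d₂ d₃ d₄ := by
  have hx : toIntersectionRing d₁ d₂ d₃ d₄ (X 0) = truncatedLift d₁ d₂ d₃ d₄
      (Polynomial.aeval (AdjoinRoot.root _) (branchPoly d₃ d₄)) := by
    rw [← Polynomial.aeval_algHom_apply, truncatedLift_root]
    exact eq_aeval_branchPoly h3 (toIntersectionRing_X_zero_pow_four d₁ d₂ d₃ d₄)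
      (toIntersectionRing_conic d₁ d₂ d₃ d₄)
  have hu : toIntersectionRing d₁ d₂ d₃ d₄ (coordU d₁ d₂) =
      truncatedLift d₁ d₂ d₃ d₄ (branchParam d₁ d₂ d₃ d₄ (coordU d₁ d₂)) := by
    rw [branchParam_coordU, truncatedLift_root]
  have hy : (X 1 : MvPolynomial (Fin 2) ℚ) = coordU d₁ d₂ - C d₁ * X 0 - C d₂ := by
    rw [coordU]; ring
  refine MvPolynomial.algHom_ext (Fin.forall_fin_two.2 ⟨?_, ?_⟩)
  · rw [AlgHom.comp_apply, branchParam_X_zero, hx]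
  · rw [AlgHom.comp_apply, hy]
    simp only [map_sub, map_mul, algHom_C, AlgHom.commutes, hu, hx, branchParam_X_zero]

theorem isUnit_branchParam_of_not_mem {s : MvPolynomial (Fin 2) ℚ} (hs : s ∉ maxIdealR d₂) :
    IsUnit (branchParam d₁ d₂ d₃ d₄ s) :=
  isUnit_of_le_comap_nilradical (isMaximal_maxIdealR d₂) (branchParam d₁ d₂ d₃ d₄).toRingHom
    (maxIdealR_le_comap_branchParam d₁ d₂ d₃ d₄) hs

noncomputable def branchLift (h3 : d₃ ≠ 0) :
    IntersectionRing d₁ d₂ d₃ d₄ →+* TruncatedPolyRing :=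
  Ideal.Quotient.lift (intersectionIdeal d₁ d₂ d₃ d₄)
    (IsLocalization.lift (M := (maxIdealR d₂).primeCompl) (S := Localization.AtPrime _)
      (g := (branchParam d₁ d₂ d₃ d₄).toRingHom)
      fun s => isUnit_branchParam_of_not_mem d₁ d₂ d₃ d₄ s.2) (by
    refine fun a ha => (Ideal.span_le.2 ?_ : intersectionIdeal d₁ d₂ d₃ d₄ ≤ RingHom.ker _) ha
    rintro _ (rfl | rfl) <;> rw [SetLike.mem_coe, RingHom.mem_ker, IsLocalization.lift_eq]
    · exact branchParam_quarticF d₁ d₂ d₃ d₄ h3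
    · exact branchParam_conicD d₁ d₂ d₃ d₄ h3)

theorem branchLift_toIntersectionRing (h3 : d₃ ≠ 0) (p : MvPolynomial (Fin 2) ℚ) :
    branchLift d₁ d₂ d₃ d₄ h3 (toIntersectionRing d₁ d₂ d₃ d₄ p) = branchParam d₁ d₂ d₃ d₄ p :=
  IsLocalization.lift_eq ..

noncomputable def truncatedPolyRingEquiv (h3 : d₃ ≠ 0) :
    TruncatedPolyRing ≃ₐ[ℚ] IntersectionRing d₁ d₂ d₃ d₄ :=
  AlgEquiv.ofAlgHom (truncatedLift d₁ d₂ d₃ d₄) (branchLift d₁ d₂ d₃ d₄ h3).toRatAlgHom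
    (AlgHom.coe_ringHom_injective <| Ideal.Quotient.ringHom_ext <|
      IsLocalization.ringHom_ext (maxIdealR d₂).primeCompl <| RingHom.ext fun p => by
        change truncatedLift d₁ d₂ d₃ d₄
            (branchLift d₁ d₂ d₃ d₄ h3 (toIntersectionRing d₁ d₂ d₃ d₄ p)) =
          toIntersectionRing d₁ d₂ d₃ d₄ p
        rw [branchLift_toIntersectionRing, ← AlgHom.comp_apply,
          truncatedLift_comp_branchParam d₁ d₂ d₃ d₄ h3])
    (AdjoinRoot.algHom_ext <| by
      simp [truncatedLift_root, branchLift_toIntersectionRing, branchParam_coordU])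

theorem finrank_intersectionRing (h3 : d₃ ≠ 0) :
    Module.finrank ℚ (IntersectionRing d₁ d₂ d₃ d₄) = 8 :=
  (truncatedPolyRingEquiv d₁ d₂ d₃ d₄ h3).toLinearEquiv.finrank_eq.symm.trans
    finrank_truncatedPolyRing

end Curves

theorem stmt_14_general (d₁ d₂ d₃ d₄ : ℚ) (h3 : d₃ ≠ 0)
    (hm : (maxIdealR d₂).IsPrime) :
    (eval (fun i => if i = 0 then 0 else -d₂) (quarticF d₁ d₂ d₃ d₄) = 0) ∧
    (eval (fun i => if i = 0 then 0 else -d₂) (conicD d₁ d₂ d₃ d₄) = 0) ∧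
    Module.finrank ℚ
      (Localization (@Ideal.primeCompl _ _ (maxIdealR d₂) hm) ⧸
        Ideal.span {algebraMap (MvPolynomial (Fin 2) ℚ)
            (Localization (@Ideal.primeCompl _ _ (maxIdealR d₂) hm)) (quarticF d₁ d₂ d₃ d₄),
          algebraMap (MvPolynomial (Fin 2) ℚ)
            (Localization (@Ideal.primeCompl _ _ (maxIdealR d₂) hm)) (conicD d₁ d₂ d₃ d₄)}) = 8 :=
  ⟨by simp [quarticF, conicD], by simp [conicD], finrank_intersectionRing d₁ d₂ d₃ d₄ h3⟩

/-- The point `R = (0, -d₂)` lies on both curves `F = 0` and `D = 0`, and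
(for `d₂ ≠ 0`, `d₃ ≠ 0`) the intersection multiplicity of the two curves at `R`, i.e.
the `ℚ`-dimension of the localization of `ℚ[x,y]/(F,D)` at the maximal ideal of `R`,
equals 8. -/
theorem stmt_14 (d₁ d₂ d₃ d₄ : ℚ) (h2 : d₂ ≠ 0) (h3 : d₃ ≠ 0)
    (hm : (maxIdealR d₂).IsPrime) :
    (eval (fun i => if i = 0 then 0 else -d₂) (quarticF d₁ d₂ d₃ d₄) = 0) ∧
    (eval (fun i => if i = 0 then 0 else -d₂) (conicD d₁ d₂ d₃ d₄) = 0) ∧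
    Module.finrank ℚ
      (Localization (@Ideal.primeCompl _ _ (maxIdealR d₂) hm) ⧸
        Ideal.span {algebraMap (MvPolynomial (Fin 2) ℚ)
            (Localization (@Ideal.primeCompl _ _ (maxIdealR d₂) hm)) (quarticF d₁ d₂ d₃ d₄),
          algebraMap (MvPolynomial (Fin 2) ℚ)
            (Localization (@Ideal.primeCompl _ _ (maxIdealR d₂) hm)) (conicD d₁ d₂ d₃ d₄)}) = 8 :=
  stmt_14_general d₁ d₂ d₃ d₄ h3 hm
end

section
/- Let a_1, a_2 ∈ ℚ with d := a_1^2 + a_1a_2 + a_2^2 ≠ 0, and define d_1 = (3/(2d))(a_1^3 + a_1^2a_2 + a_1a_2^2 + a_2^3), d_2 = -(3/(2d))a_1^3a_2^3, d_3 = -(3/(4d))a_1^3a_2^3(a_1 + a_2), d_4 = (3/(4d))(a_1^4 + a_1^3a_2 + a_1^2a_2^2 + a_1a_2^3 + a_2^4), and F(x,y) = ((y + d_1x + d_2)^2 + d_3x + d_4x^2)y + x^4. Then for i = 1, 2: F(a_i^3, y) = (y + a_i^4)^3 as polynomials in y. -/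
/-!
Comparing coefficients with `(y + r) ^ 3`, the cubic `((y + c) ^ 2 + e) y + k` is a perfect cube
exactly when `2c = 3r`, `c ^ 2 + e = 3r ^ 2` and `k = r ^ 3`. For `x = a₁ ^ 3` the constants are
`c = d₁ a₁ ^ 3 + d₂` and `e = d₃ a₁ ^ 3 + d₄ a₁ ^ 6`, and the choice of the `dⱼ` is made so that the
factor `d` cancels: `c = (3 / (2d)) a₁ ^ 4 d` and `e = (3 / (4d)) a₁ ^ 8 d`. Since `d` and the `dⱼ` are
symmetric in `a₁, a₂`, the case of `a₂` follows.
-/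

open Polynomial

lemma sq_add_C_mul_X_add_C_eq_X_add_C_pow_three {R : Type*} [CommRing R] {c e k r : R}
    (hc : 2 * c = 3 * r) (he : c ^ 2 + e = 3 * r ^ 2) (hk : k = r ^ 3) :
    ((X + C c) ^ 2 + C e) * X + C k = (X + C r) ^ 3 := by
  have hc' : 2 * C c = 3 * C r := by simpa [map_ofNat C] using congrArg C hc
  have he' : C c ^ 2 + C e = 3 * C r ^ 2 := by simpa [map_ofNat C] using congrArg C he
  have hk' : C k = C r ^ 3 := by simpa using congrArg C hk
  linear_combination X ^ 2 * hc' + X * he' + hk'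

lemma coeffs_of_vertical_inflection {K : Type*} [Field K] [NeZero (2 : K)]
    {a b d d₁ d₂ d₃ d₄ : K} (hd' : d = a ^ 2 + a * b + b ^ 2) (hd : d ≠ 0)
    (h₁ : d₁ = 3 / (2 * d) * (a ^ 3 + a ^ 2 * b + a * b ^ 2 + b ^ 3))
    (h₂ : d₂ = -(3 / (2 * d)) * a ^ 3 * b ^ 3)
    (h₃ : d₃ = -(3 / (4 * d)) * a ^ 3 * b ^ 3 * (a + b))
    (h₄ : d₄ = 3 / (4 * d) * (a ^ 4 + a ^ 3 * b + a ^ 2 * b ^ 2 + a * b ^ 3 + b ^ 4)) :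
    2 * (d₁ * a ^ 3 + d₂) = 3 * a ^ 4 ∧
      (d₁ * a ^ 3 + d₂) ^ 2 + (d₃ * a ^ 3 + d₄ * (a ^ 3) ^ 2) = 3 * (a ^ 4) ^ 2 := by
  have h4 : (4 : K) ≠ 0 := by
    simpa [← sq, show (2 : K) ^ 2 = 4 by norm_num] using pow_ne_zero 2 (two_ne_zero' K)
  subst h₁ h₂ h₃ h₄
  constructor <;>
  · field_simp
    subst hd'
    ring

/-- With `d = a₁² + a₁a₂ + a₂² ≠ 0` and `d₁, d₂, d₃, d₄` as in Example 6.2,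
for `F(x,y) = ((y + d₁x + d₂)² + d₃x + d₄x²)y + x⁴` we have
`F(aᵢ³, y) = (y + aᵢ⁴)³` in `ℚ[y]` for `i = 1, 2`. -/
theorem stmt_18 (a₁ a₂ : ℚ) (d : ℚ) (hd' : d = a₁ ^ 2 + a₁ * a₂ + a₂ ^ 2) (hd : d ≠ 0)
    (d₁ d₂ d₃ d₄ : ℚ)
    (h₁ : d₁ = 3 / (2 * d) * (a₁ ^ 3 + a₁ ^ 2 * a₂ + a₁ * a₂ ^ 2 + a₂ ^ 3))
    (h₂ : d₂ = -(3 / (2 * d)) * a₁ ^ 3 * a₂ ^ 3)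
    (h₃ : d₃ = -(3 / (4 * d)) * a₁ ^ 3 * a₂ ^ 3 * (a₁ + a₂))
    (h₄ : d₄ = 3 / (4 * d) * (a₁ ^ 4 + a₁ ^ 3 * a₂ + a₁ ^ 2 * a₂ ^ 2 + a₁ * a₂ ^ 3 + a₂ ^ 4)) :
    (((X + C (d₁ * a₁ ^ 3 + d₂)) ^ 2 + C (d₃ * a₁ ^ 3 + d₄ * (a₁ ^ 3) ^ 2)) * X +
        C ((a₁ ^ 3) ^ 4) = (X + C (a₁ ^ 4)) ^ 3) ∧
    (((X + C (d₁ * a₂ ^ 3 + d₂)) ^ 2 + C (d₃ * a₂ ^ 3 + d₄ * (a₂ ^ 3) ^ 2)) * X +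
        C ((a₂ ^ 3) ^ 4) = (X + C (a₂ ^ 4)) ^ 3) := by
  obtain ⟨hc₁, he₁⟩ := coeffs_of_vertical_inflection hd' hd h₁ h₂ h₃ h₄
  obtain ⟨hc₂, he₂⟩ := coeffs_of_vertical_inflection (a := a₂) (b := a₁)
    (hd'.trans (by ring)) hd (h₁.trans (by ring)) (h₂.trans (by ring)) (h₃.trans (by ring))
    (h₄.trans (by ring))
  exact ⟨sq_add_C_mul_X_add_C_eq_X_add_C_pow_three hc₁ he₁ (by ring),
    sq_add_C_mul_X_add_C_eq_X_add_C_pow_three hc₂ he₂ (by ring)⟩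
end
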